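/- Let $c > 0$, $z \in (0,1)$, and $x$ real with $0 < x < (1-z)^2$. Then $\sum_{k\geq 1} z^k\, {}_2F_1\!\left(\frac{k}{2}, \frac{k+1}{2}; c; x\right) = \frac{z}{1-z}\, {}_2F_1\!\left(\frac{1}{2}, 1; c; \frac{x}{(1-z)^2}\right)$, with all series converging absolutely. -/

import Mathlib

open Real

noncomputable def poch (a : ℝ) (n : ℕ) : ℝ := (ascPochhammer ℝ n).eval a

/-- The Gauss hypergeometric series `₂F₁(a,b;c;x)`. -/
noncomputable def hyp2F1 (a b c x : ℝ) : ℝ :=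
  ∑' n : ℕ, poch a n * poch b n / (poch c n * (n.factorial : ℝ)) * x ^ n

/-! Letac's identity reduces to the negative binomial series. By Legendre duplication,
`(k+1)/2` and `(k+2)/2` give `((k+1)/2)ₙ ((k+2)/2)ₙ = (k+1)₂ₙ / 4ⁿ = C(k+2n, 2n) (1/2)ₙ (1)ₙ`, so
the `n`-th term of `₂F₁((k+1)/2, (k+2)/2; c; x)` is `C(k+2n, 2n)` times that of
`₂F₁(1/2, 1; c; x)`. Summing `z^(k+1) C(k+2n, 2n)` over `k` gives `z / (1-z)^(2n+1)`, which turns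
the `n`-th term into that of `z/(1-z) ₂F₁(1/2, 1; c; x/(1-z)²)`. All terms are nonnegative,
so the two summations may be exchanged. -/

theorem hasSum_tsum_swap_of_nonneg {β γ : Type*} {f : β → γ → ℝ} {g : β → ℝ} {a : ℝ}
    (hf : ∀ b c, 0 ≤ f b c) (hrow : ∀ b, HasSum (f b) (g b)) (hg : HasSum g a) :
    (∀ c, Summable fun b => f b c) ∧ HasSum (fun c => ∑' b, f b c) a := by
  have hf' : 0 ≤ Function.uncurry f := fun p => hf p.1 p.2
  have hsum : Summable (Function.uncurry f) := (summable_prod_of_nonneg hf').2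
    ⟨fun b => (hrow b).summable, hg.summable.congr fun b => ((hrow b).tsum_eq).symm⟩
  obtain ⟨hcol, hcolsum⟩ : (∀ c, Summable fun b => f b c) ∧ Summable fun c => ∑' b, f b c :=
    (summable_prod_of_nonneg fun p => hf' p.swap).1 hsum.prod_symm
  refine ⟨hcol, ?_⟩
  convert hcolsum.hasSum using 1
  rw [hsum.tsum_comm' (fun b => (hrow b).summable) hcol, tsum_congr fun b => (hrow b).tsum_eq,
    hg.tsum_eq]

lemma poch_succ (a : ℝ) (n : ℕ) : poch a (n + 1) = poch a n * (a + n) :=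
  ascPochhammer_succ_eval n a

lemma poch_pos {a : ℝ} (ha : 0 < a) (n : ℕ) : 0 < poch a n :=
  ascPochhammer_pos n a ha

lemma poch_natCast_add_one (k n : ℕ) :
    poch ((k : ℝ) + 1) n = (k + n).choose n * n.factorial := by
  rw [poch, ← Nat.cast_succ, ← ascPochhammer_eval_cast, ascPochhammer_nat_eq_ascFactorial,
    Nat.ascFactorial_eq_factorial_mul_choose]
  push_cast
  ring

lemma poch_mul_poch_add_half (a : ℝ) (n : ℕ) :
    poch a n * poch (a + 1 / 2) n = poch (2 * a) (2 * n) / 4 ^ n := by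
  induction n with
  | zero => simp [poch]
  | succ n ih =>
    rw [show 2 * (n + 1) = 2 * n + 1 + 1 by ring, poch_succ, poch_succ, poch_succ, poch_succ,
      show poch a n * (a + n) * (poch (a + 1 / 2) n * (a + 1 / 2 + n)) =
        poch a n * poch (a + 1 / 2) n * ((a + n) * (a + 1 / 2 + n)) by ring, ih]
    push_cast
    field_simp
    ring

lemma poch_one (n : ℕ) : poch 1 n = n.factorial := by
  simpa using poch_natCast_add_one 0 n

lemma poch_half_natCast_mul (k n : ℕ) :
    poch (((k : ℝ) + 1) / 2) n * poch (((k : ℝ) + 2) / 2) n =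
      (k + 2 * n).choose (2 * n) * (poch (1 / 2) n * poch 1 n) := by
  have hk := poch_mul_poch_add_half (((k : ℝ) + 1) / 2) n
  have h0 := poch_mul_poch_add_half (1 / 2) n
  rw [show ((k : ℝ) + 1) / 2 + 1 / 2 = ((k : ℝ) + 2) / 2 by ring,
    show 2 * (((k : ℝ) + 1) / 2) = (k : ℝ) + 1 by ring, poch_natCast_add_one] at hk
  rw [show (1 : ℝ) / 2 + 1 / 2 = 1 by norm_num, show 2 * ((1 : ℝ) / 2) = 1 by norm_num,
    poch_one (2 * n)] at h0
  rw [hk, h0]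
  ring

noncomputable def hyp2F1Term (a b c x : ℝ) (n : ℕ) : ℝ :=
  poch a n * poch b n / (poch c n * (n.factorial : ℝ)) * x ^ n

lemma hyp2F1_eq_tsum (a b c x : ℝ) : hyp2F1 a b c x = ∑' n, hyp2F1Term a b c x n := rfl

lemma hyp2F1Term_nonneg {a b c x : ℝ} (ha : 0 < a) (hb : 0 < b) (hc : 0 < c) (hx : 0 ≤ x)
    (n : ℕ) : 0 ≤ hyp2F1Term a b c x n := by
  have := poch_pos ha n
  have := poch_pos hb n
  have := poch_pos hc n
  unfold hyp2F1Term
  positivity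

lemma hyp2F1Term_div (a b c x w : ℝ) (n : ℕ) :
    hyp2F1Term a b c (x / w) n = hyp2F1Term a b c x n / w ^ n := by
  rw [hyp2F1Term, hyp2F1Term, div_pow]
  ring

lemma hyp2F1Term_half_natCast (k : ℕ) (c x : ℝ) (n : ℕ) :
    hyp2F1Term (((k : ℝ) + 1) / 2) (((k : ℝ) + 2) / 2) c x n =
      (k + 2 * n).choose (2 * n) * hyp2F1Term (1 / 2) 1 c x n := by
  rw [hyp2F1Term, hyp2F1Term, poch_half_natCast_mul]
  ring

lemma summable_hyp2F1Term {a b c x : ℝ}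
    (habc : ∀ k : ℕ, (k : ℝ) ≠ -a ∧ (k : ℝ) ≠ -b ∧ (k : ℝ) ≠ -c) (hx : |x| < 1) :
    Summable (hyp2F1Term a b c x) := by
  have hx' : x ∈ Metric.eball (0 : ℝ) (ordinaryHypergeometricSeries ℝ a b c).radius := by
    rw [ordinaryHypergeometricSeries_radius_eq_one ℝ a b c habc, Metric.mem_eball, edist_zero_right]
    rwa [Real.enorm_eq_ofReal_abs, ENNReal.ofReal_lt_one]
  refine (FormalMultilinearSeries.summable_norm_apply _ hx').of_norm.congr fun n => ?_
  rw [ordinaryHypergeometricSeries_apply_eq, smul_eq_mul, hyp2F1Term, poch, poch, poch]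
  ring

lemma hasSum_pow_succ_mul_hyp2F1Term_half_natCast {z : ℝ} (hz : |z| < 1) (c x : ℝ) (n : ℕ) :
    HasSum (fun k : ℕ => z ^ (k + 1) * hyp2F1Term (((k : ℝ) + 1) / 2) (((k : ℝ) + 2) / 2) c x n)
      (z / (1 - z) * hyp2F1Term (1 / 2) 1 c (x / (1 - z) ^ 2) n) := by
  have h1z : 1 - z ≠ 0 := by linarith [le_abs_self z]
  have hvalue : z / (1 - z) * hyp2F1Term (1 / 2) 1 c (x / (1 - z) ^ 2) n =
      z * hyp2F1Term (1 / 2) 1 c x n * (1 / (1 - z) ^ (2 * n + 1)) := by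
    rw [hyp2F1Term_div, ← pow_mul, pow_succ]
    field_simp
  rw [hvalue]
  refine ((hasSum_choose_mul_geometric_of_norm_lt_one (2 * n)
    (r := z) (by rwa [Real.norm_eq_abs])).mul_left _).congr_fun fun k => ?_
  rw [hyp2F1Term_half_natCast]
  ring

/-- Letac's sum: for `c > 0`, `0 < z < 1`, `0 < x < (1-z)²`,
`∑_{k≥1} z^k ₂F₁(k/2,(k+1)/2;c;x) = z/(1-z) ₂F₁(1/2,1;c;x/(1-z)²)`. -/
theorem letac_sum (c z x : ℝ) (hc : 0 < c) (hz0 : 0 < z) (hz1 : z < 1)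
    (hx0 : 0 < x) (hx1 : x < (1 - z) ^ 2) :
    (∀ k : ℕ, Summable fun n : ℕ =>
        poch (((k : ℝ) + 1) / 2) n * poch (((k : ℝ) + 2) / 2) n /
          (poch c n * (n.factorial : ℝ)) * x ^ n) ∧
    (Summable fun k : ℕ =>
        z ^ (k + 1) * hyp2F1 (((k : ℝ) + 1) / 2) (((k : ℝ) + 2) / 2) c x) ∧
    (∑' k : ℕ, z ^ (k + 1) * hyp2F1 (((k : ℝ) + 1) / 2) (((k : ℝ) + 2) / 2) c x) =
      z / (1 - z) * hyp2F1 (1 / 2) 1 c (x / (1 - z) ^ 2) := by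
  have hz : |z| < 1 := abs_lt.2 ⟨by linarith, hz1⟩
  have hu : |x / (1 - z) ^ 2| < 1 := by
    rw [abs_of_pos (by positivity), div_lt_one (by nlinarith)]
    exact hx1
  have hparams : ∀ k : ℕ, (k : ℝ) ≠ -(1 / 2) ∧ (k : ℝ) ≠ -1 ∧ (k : ℝ) ≠ -c := fun k => by
    refine ⟨?_, ?_, ?_⟩ <;> linarith [k.cast_nonneg (α := ℝ)]
  obtain ⟨hcols, hsum⟩ := hasSum_tsum_swap_of_nonneg
    (fun n k => mul_nonneg (pow_pos hz0 _).le (hyp2F1Term_nonneg (by positivity)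
      (by positivity) hc hx0.le n))
    (hasSum_pow_succ_mul_hyp2F1Term_half_natCast hz c x)
    ((summable_hyp2F1Term hparams hu).hasSum.mul_left (z / (1 - z)))
  simp_rw [hyp2F1_eq_tsum, ← tsum_mul_left]
  exact ⟨fun k => (summable_mul_left_iff (pow_pos hz0 _).ne').1 (hcols k), hsum.summable,
    hsum.tsum_eq.trans tsum_mul_left.symm⟩
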